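/- arXiv:math/0404122 — 2 statements merged into one kernel-verified Lean document; each statement's English description precedes it below -/
import Mathlib

section
/- Let f₁ : A₁ → B₁ and f₂ : A₂ → B₂ be morphisms of complexes. The R-linear map s(f₁) ⊗ s(f₂) → s(f₁⊗f₂) defined on the four types of homogeneous tensors by: a₁⊗a₂ ↦ a₁⊗a₂ (in A₁⊗A₂), b₁⊗a₂ ↦ b₁⊗a₂ (in B₁⊗A₂), a₁⊗b₂ ↦ (−1)^n a₁⊗b₂ (in A₁⊗B₂, where n = deg a₁), b₁⊗b₂ ↦ (−1)^{n−1} b₁⊗b₂ (in B₁⊗B₂, where n−1 = deg b₁) — equivalently, sending (a₁,b₁)⊗(a₂,b₂) with (a₁,b₁) ∈ s(f₁)^n, (a₂,b₂) ∈ s(f₂)^m to (a₁⊗a₂, (b₁⊗a₂, (−1)^n a₁⊗b₂), (−1)^{n−1} b₁⊗b₂) — is an isomorphism of complexes. -/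
noncomputable section

open DirectSum
open scoped TensorProduct

universe u v

/-- The data of a cochain complex of `R`-modules indexed by `ℤ` (the condition `d ∘ d = 0`
is stated separately as a hypothesis where needed). -/
structure Cplx (R : Type u) [CommRing R] where
  /-- the degree `n` part -/
  X : ℤ → Type v
  [grp : ∀ n, AddCommGroup (X n)]
  [mod : ∀ n, Module R (X n)]
  /-- the differential -/
  d : ∀ n, X n →ₗ[R] X (n + 1)

attribute [instance] Cplx.grp Cplx.mod

variable {R : Type u} [CommRing R]

/-- Transport along an equality of degrees. -/
def Cplx.cE (A : Cplx R) : ∀ {i j : ℤ}, i = j → (A.X i →ₗ[R] A.X j)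
  | _, _, rfl => LinearMap.id

/-- Morphisms of complexes, i.e. `R`-linear chain maps. -/
structure Hom (A B : Cplx R) where
  /-- the components -/
  f : ∀ n, A.X n →ₗ[R] B.X n
  comm : ∀ n x, f (n + 1) (A.d n x) = B.d n (f n x)

/-- The degree `n` part of the tensor product of two complexes:
`(A ⊗ B)^n = ⊕_{p+q=n} A^p ⊗ B^q`. -/
abbrev tX (A B : Cplx R) (n : ℤ) :=
  ⨁ p : ℤ, A.X p ⊗[R] B.X (n - p)

/-- Transport along an equality of degrees for the tensor product. -/
def tc (A B : Cplx R) : ∀ {i j : ℤ}, i = j → (tX A B i →ₗ[R] tX A B j)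
  | _, _, rfl => LinearMap.id

/-- The differential of the tensor product of complexes:
`d(x ⊗ y) = d x ⊗ y + (-1)^p x ⊗ d y` for `x ∈ A^p`. -/
def tD (A B : Cplx R) (n : ℤ) : tX A B n →ₗ[R] tX A B (n + 1) :=
  DirectSum.toModule R ℤ (tX A B (n + 1)) fun p =>
    (DirectSum.lof R ℤ (fun q => A.X q ⊗[R] B.X (n + 1 - q)) (p + 1)).comp
      (TensorProduct.map (A.d p) (B.cE (show n - p = n + 1 - (p + 1) by omega))) +
    (p.negOnePow : ℤ) •
      ((DirectSum.lof R ℤ (fun q => A.X q ⊗[R] B.X (n + 1 - q)) p).comp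
        (TensorProduct.map LinearMap.id
          ((B.cE (show n - p + 1 = n + 1 - p by omega)).comp (B.d (n - p)))))

/-- The tensor product of complexes. -/
def tens (A B : Cplx R) : Cplx R where
  X := tX A B
  d := tD A B

/-- The map of tensor products induced by a pair of degreewise maps. -/
def tM {A A' B B' : Cplx R} (φ : ∀ n, A.X n →ₗ[R] A'.X n) (ψ : ∀ n, B.X n →ₗ[R] B'.X n)
    (n : ℤ) : tX A B n →ₗ[R] tX A' B' n :=
  DirectSum.toModule R ℤ (tX A' B' n) fun p =>
    (DirectSum.lof R ℤ (fun q => A'.X q ⊗[R] B'.X (n - q)) p).comp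
      (TensorProduct.map (φ p) (ψ (n - p)))

/-- The simple complex `s(f)` of a morphism of complexes:
`s(f)^n = A^n ⊕ B^{n-1}` with `d(a,b) = (d a, f(a) - d b)`. -/
def smp {A B : Cplx R} (φ : Hom A B) : Cplx R where
  X n := A.X n × B.X (n - 1)
  d n := ((LinearMap.id : A.X (n + 1) →ₗ[R] A.X (n + 1)).prodMap
      (B.cE (show n = n + 1 - 1 by omega))).comp
    (((A.d n).comp (LinearMap.fst R (A.X n) (B.X (n - 1)))).prod
      ((φ.f n).comp (LinearMap.fst R (A.X n) (B.X (n - 1))) -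
        ((B.cE (show n - 1 + 1 = n by omega)).comp (B.d (n - 1))).comp
          (LinearMap.snd R (A.X n) (B.X (n - 1)))))

section SFT

variable (A₁ B₁ A₂ B₂ : Cplx R)

/-- The degree `n` part of `s(f₁ ⊗ f₂)`:
`(A₁⊗A₂)^n ⊕ ((B₁⊗A₂) ⊕ (A₁⊗B₂))^{n-1} ⊕ (B₁⊗B₂)^{n-2}`. -/
abbrev sftX (n : ℤ) :=
  tX A₁ A₂ n × (tX B₁ A₂ (n - 1) × tX A₁ B₂ (n - 1)) × tX B₁ B₂ (n - 2)

variable {A₁ B₁ A₂ B₂}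

/-- The differential of `s(f₁ ⊗ f₂)`:
`d(x,(u,v),w) = (d x, ((f₁⊗1)x - d u, (1⊗f₂)x - d v), -(1⊗f₂)u + (f₁⊗1)v + d w)`. -/
def sftD (f₁ : Hom A₁ B₁) (f₂ : Hom A₂ B₂) (n : ℤ) :
    sftX A₁ B₁ A₂ B₂ n →ₗ[R] sftX A₁ B₁ A₂ B₂ (n + 1) :=
  let P1 := LinearMap.fst R (tX A₁ A₂ n)
    ((tX B₁ A₂ (n - 1) × tX A₁ B₂ (n - 1)) × tX B₁ B₂ (n - 2))
  let Pr := LinearMap.snd R (tX A₁ A₂ n)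
    ((tX B₁ A₂ (n - 1) × tX A₁ B₂ (n - 1)) × tX B₁ B₂ (n - 2))
  let P2 := (LinearMap.fst R (tX B₁ A₂ (n - 1)) (tX A₁ B₂ (n - 1))).comp
    ((LinearMap.fst R (tX B₁ A₂ (n - 1) × tX A₁ B₂ (n - 1)) (tX B₁ B₂ (n - 2))).comp Pr)
  let P3 := (LinearMap.snd R (tX B₁ A₂ (n - 1)) (tX A₁ B₂ (n - 1))).comp
    ((LinearMap.fst R (tX B₁ A₂ (n - 1) × tX A₁ B₂ (n - 1)) (tX B₁ B₂ (n - 2))).comp Pr)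
  let P4 := (LinearMap.snd R (tX B₁ A₂ (n - 1) × tX A₁ B₂ (n - 1)) (tX B₁ B₂ (n - 2))).comp Pr
  let C1 := (tD A₁ A₂ n).comp P1
  let C2 := (tc B₁ A₂ (show n = n + 1 - 1 by omega)).comp
      ((tM f₁.f (fun _ => LinearMap.id) n).comp P1) -
    (tc B₁ A₂ (show n - 1 + 1 = n + 1 - 1 by omega)).comp ((tD B₁ A₂ (n - 1)).comp P2)
  let C3 := (tc A₁ B₂ (show n = n + 1 - 1 by omega)).comp
      ((tM (fun _ => LinearMap.id) f₂.f n).comp P1) -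
    (tc A₁ B₂ (show n - 1 + 1 = n + 1 - 1 by omega)).comp ((tD A₁ B₂ (n - 1)).comp P3)
  let C4 := -((tc B₁ B₂ (show n - 1 = n + 1 - 2 by omega)).comp
      ((tM (fun _ => LinearMap.id) f₂.f (n - 1)).comp P2)) +
    (tc B₁ B₂ (show n - 1 = n + 1 - 2 by omega)).comp
      ((tM f₁.f (fun _ => LinearMap.id) (n - 1)).comp P3) +
    (tc B₁ B₂ (show n - 2 + 1 = n + 1 - 2 by omega)).comp ((tD B₁ B₂ (n - 2)).comp P4)
  C1.prod ((C2.prod C3).prod C4)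

/-- The component on the `p`-th summand of the canonical map
`s(f₁) ⊗ s(f₂) → s(f₁ ⊗ f₂)`. -/
def rhoc (f₁ : Hom A₁ B₁) (f₂ : Hom A₂ B₂) (n p : ℤ) :
    ((smp f₁).X p ⊗[R] (smp f₂).X (n - p)) →ₗ[R] sftX A₁ B₁ A₂ B₂ n :=
  let D1 := (DirectSum.lof R ℤ (fun q => A₁.X q ⊗[R] A₂.X (n - q)) p).comp
    (TensorProduct.map (LinearMap.fst R (A₁.X p) (B₁.X (p - 1)))
      (LinearMap.fst R (A₂.X (n - p)) (B₂.X (n - p - 1))))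
  let D2 := (DirectSum.lof R ℤ (fun q => B₁.X q ⊗[R] A₂.X (n - 1 - q)) (p - 1)).comp
    (TensorProduct.map (LinearMap.snd R (A₁.X p) (B₁.X (p - 1)))
      ((A₂.cE (show n - p = n - 1 - (p - 1) by omega)).comp
        (LinearMap.fst R (A₂.X (n - p)) (B₂.X (n - p - 1)))))
  let D3 := (p.negOnePow : ℤ) •
    ((DirectSum.lof R ℤ (fun q => A₁.X q ⊗[R] B₂.X (n - 1 - q)) p).comp
      (TensorProduct.map (LinearMap.fst R (A₁.X p) (B₁.X (p - 1)))
        ((B₂.cE (show n - p - 1 = n - 1 - p by omega)).comp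
          (LinearMap.snd R (A₂.X (n - p)) (B₂.X (n - p - 1))))))
  let D4 := ((p - 1).negOnePow : ℤ) •
    ((DirectSum.lof R ℤ (fun q => B₁.X q ⊗[R] B₂.X (n - 2 - q)) (p - 1)).comp
      (TensorProduct.map (LinearMap.snd R (A₁.X p) (B₁.X (p - 1)))
        ((B₂.cE (show n - p - 1 = n - 2 - (p - 1) by omega)).comp
          (LinearMap.snd R (A₂.X (n - p)) (B₂.X (n - p - 1))))))
  D1.prod ((D2.prod D3).prod D4)

/-- The canonical map `s(f₁) ⊗ s(f₂) → s(f₁ ⊗ f₂)`. -/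
def rho (f₁ : Hom A₁ B₁) (f₂ : Hom A₂ B₂) (n : ℤ) :
    tX (smp f₁) (smp f₂) n →ₗ[R] sftX A₁ B₁ A₂ B₂ n :=
  DirectSum.toModule R ℤ (sftX A₁ B₁ A₂ B₂ n) (rhoc f₁ f₂ n)

end SFT


section Helpers

variable {R : Type u} [CommRing R]

@[simp] lemma cE_refl (A : Cplx R) {i : ℤ} (h : i = i) : A.cE h = LinearMap.id := rfl

@[simp] lemma cE_cE (A : Cplx R) {i j k : ℤ} (h : i = j) (h' : j = k) (x : A.X i) :
    A.cE h' (A.cE h x) = A.cE (h.trans h') x := by cases h; cases h'; rfl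

@[simp] lemma d_cE (A : Cplx R) {i j : ℤ} (h : i = j) (x : A.X i) :
    A.d j (A.cE h x) = A.cE (show i + 1 = j + 1 by omega) (A.d i x) := by cases h; rfl

@[simp] lemma f_cE {A B : Cplx R} (φ : Hom A B) {i j : ℤ} (h : i = j) (x : A.X i) :
    φ.f j (A.cE h x) = B.cE h (φ.f i x) := by cases h; rfl

@[simp] lemma tc_refl (A B : Cplx R) {i : ℤ} (h : i = i) : tc A B h = LinearMap.id := rfl

@[simp] lemma tc_tc (A B : Cplx R) {i j k : ℤ} (h : i = j) (h' : j = k) (z : tX A B i) :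
    tc A B h' (tc A B h z) = tc A B (h.trans h') z := by cases h; cases h'; rfl

@[simp] lemma tD_tc (A B : Cplx R) {i j : ℤ} (h : i = j) (z : tX A B i) :
    tD A B j (tc A B h z) = tc A B (show i + 1 = j + 1 by omega) (tD A B i z) := by
  cases h; rfl

@[simp] lemma tM_tc {A A' B B' : Cplx R} (φ : ∀ n, A.X n →ₗ[R] A'.X n)
    (ψ : ∀ n, B.X n →ₗ[R] B'.X n) {i j : ℤ} (h : i = j) (z : tX A B i) :
    tM φ ψ j (tc A B h z) = tc A' B' h (tM φ ψ i z) := by cases h; rfl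

lemma tc_lof (A B : Cplx R) {i j : ℤ} (h : i = j) (p : ℤ) (x : A.X p) (y : B.X (i - p)) :
    tc A B h (DirectSum.lof R ℤ (fun q => A.X q ⊗[R] B.X (i - q)) p (x ⊗ₜ y)) =
      DirectSum.lof R ℤ (fun q => A.X q ⊗[R] B.X (j - q)) p
        (x ⊗ₜ B.cE (show i - p = j - p by omega) y) := by cases h; rfl

lemma lof_shift (A B : Cplx R) (m : ℤ) {i j : ℤ} (h : i = j) (x : A.X i) (y : B.X (m - i)) :
    DirectSum.lof R ℤ (fun q => A.X q ⊗[R] B.X (m - q)) i (x ⊗ₜ y) =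
      DirectSum.lof R ℤ (fun q => A.X q ⊗[R] B.X (m - q)) j
        (A.cE h x ⊗ₜ B.cE (show m - i = m - j by omega) y) := by cases h; rfl

lemma tD_lof (A B : Cplx R) (n p : ℤ) (x : A.X p) (y : B.X (n - p)) :
    tD A B n (DirectSum.lof R ℤ (fun q => A.X q ⊗[R] B.X (n - q)) p (x ⊗ₜ y)) =
      DirectSum.lof R ℤ (fun q => A.X q ⊗[R] B.X (n + 1 - q)) (p + 1)
        (A.d p x ⊗ₜ B.cE (show n - p = n + 1 - (p + 1) by omega) y) +
      (p.negOnePow : ℤ) • DirectSum.lof R ℤ (fun q => A.X q ⊗[R] B.X (n + 1 - q)) p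
        (x ⊗ₜ B.cE (show n - p + 1 = n + 1 - p by omega) (B.d (n - p) y)) := by
  simp [tD, DirectSum.toModule_lof]

lemma tM_lof {A A' B B' : Cplx R} (φ : ∀ n, A.X n →ₗ[R] A'.X n)
    (ψ : ∀ n, B.X n →ₗ[R] B'.X n) (n p : ℤ) (x : A.X p) (y : B.X (n - p)) :
    tM φ ψ n (DirectSum.lof R ℤ (fun q => A.X q ⊗[R] B.X (n - q)) p (x ⊗ₜ y)) =
      DirectSum.lof R ℤ (fun q => A'.X q ⊗[R] B'.X (n - q)) p (φ p x ⊗ₜ ψ (n - p) y) := by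
  simp [tM, DirectSum.toModule_lof]

@[simp] lemma negOnePow_pred (p : ℤ) : (p - 1).negOnePow = -p.negOnePow := by
  rw [← neg_neg ((p-1).negOnePow), ← Int.negOnePow_succ, sub_add_cancel]

end Helpers
section Helpers2
variable {R : Type u} [CommRing R]

lemma tD_tD (A B : Cplx R) (hA : ∀ n x, A.d (n + 1) (A.d n x) = 0)
    (hB : ∀ n x, B.d (n + 1) (B.d n x) = 0) (n : ℤ) (z : tX A B n) :
    tD A B (n + 1) (tD A B n z) = 0 := by
  have : ((tD A B (n + 1)).comp (tD A B n)) = 0 := by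
    apply DirectSum.linearMap_ext
    intro p
    apply TensorProduct.ext'
    intro x y
    simp [tD_lof, hA, hB, Int.negOnePow_succ, smul_smul, Int.units_mul_self]
  exact DFunLike.congr_fun this z

end Helpers2
section Helpers3
variable {R : Type u} [CommRing R]

@[simp] lemma smp_d {A B : Cplx R} (φ : Hom A B) (n : ℤ) (z : (smp φ).X n) :
    (smp φ).d n z = (A.d n z.1,
      B.cE (show n = n + 1 - 1 by omega)
        (φ.f n z.1 - B.cE (show n - 1 + 1 = n by omega) (B.d (n - 1) z.2))) := rfl

@[simp] lemma smp_cE {A B : Cplx R} (φ : Hom A B) {i j : ℤ} (h : i = j) (z : (smp φ).X i) :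
    (smp φ).cE h z = (A.cE h z.1, B.cE (show i - 1 = j - 1 by omega) z.2) := by cases h; rfl

lemma smp_dd {A B : Cplx R} (φ : Hom A B)
    (hA : ∀ n x, A.d (n + 1) (A.d n x) = 0) (hB : ∀ n x, B.d (n + 1) (B.d n x) = 0)
    (n : ℤ) (z : (smp φ).X n) : (smp φ).d (n + 1) ((smp φ).d n z) = 0 := by
  have h1 := φ.comm n z.1
  rw [smp_d φ (n + 1) ((smp φ).d n z)]
  simp only [smp_d]
  rw [show (0 : (smp φ).X (n + 1 + 1)) =
    ((0 : A.X (n + 1 + 1)), (0 : B.X (n + 1 + 1 - 1))) from rfl]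
  refine Prod.ext (hA n z.1) ?_
  simp [d_cE, cE_cE, map_sub, h1, hB]

end Helpers3
section Helpers4
variable {R : Type u} [CommRing R]

@[simp] lemma fam_cE {A B : Cplx R} (ψ : ∀ n, A.X n →ₗ[R] B.X n) {i j : ℤ} (h : i = j)
    (x : A.X i) : ψ j (A.cE h x) = B.cE h (ψ i x) := by cases h; rfl

lemma tM_tD {A A' B B' : Cplx R} (φ : ∀ n, A.X n →ₗ[R] A'.X n)
    (ψ : ∀ n, B.X n →ₗ[R] B'.X n)
    (hφ : ∀ n x, φ (n + 1) (A.d n x) = A'.d n (φ n x))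
    (hψ : ∀ n x, ψ (n + 1) (B.d n x) = B'.d n (ψ n x)) (n : ℤ) (z : tX A B n) :
    tM φ ψ (n + 1) (tD A B n z) = tD A' B' n (tM φ ψ n z) := by
  have : (tM φ ψ (n + 1)).comp (tD A B n) = (tD A' B' n).comp (tM φ ψ n) := by
    apply DirectSum.linearMap_ext
    intro p
    apply TensorProduct.ext'
    intro x y
    simp [tD_lof, tM_lof, hφ, hψ]
  exact DFunLike.congr_fun this z

lemma tM_tM {A A' A'' B B' B'' : Cplx R} (φ : ∀ n, A.X n →ₗ[R] A'.X n)
    (ψ : ∀ n, B.X n →ₗ[R] B'.X n) (φ' : ∀ n, A'.X n →ₗ[R] A''.X n)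
    (ψ' : ∀ n, B'.X n →ₗ[R] B''.X n) (n : ℤ) (z : tX A B n) :
    tM φ' ψ' n (tM φ ψ n z) = tM (fun p => (φ' p).comp (φ p))
      (fun p => (ψ' p).comp (ψ p)) n z := by
  have : (tM φ' ψ' n).comp (tM φ ψ n) = tM (fun p => (φ' p).comp (φ p))
      (fun p => (ψ' p).comp (ψ p)) n := by
    apply DirectSum.linearMap_ext
    intro p
    apply TensorProduct.ext'
    intro x y
    simp [tM_lof]
  exact DFunLike.congr_fun this z

end Helpers4
section Helpers5
variable {R : Type u} [CommRing R] {A₁ B₁ A₂ B₂ : Cplx R}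

@[simp] lemma sftD_apply (f₁ : Hom A₁ B₁) (f₂ : Hom A₂ B₂) (n : ℤ)
    (z : sftX A₁ B₁ A₂ B₂ n) :
    sftD f₁ f₂ n z =
      (tD A₁ A₂ n z.1,
       (tc B₁ A₂ (show n = n + 1 - 1 by omega)
          (tM f₁.f (fun _ => LinearMap.id) n z.1) -
        tc B₁ A₂ (show n - 1 + 1 = n + 1 - 1 by omega) (tD B₁ A₂ (n - 1) z.2.1.1),
        tc A₁ B₂ (show n = n + 1 - 1 by omega)
          (tM (fun _ => LinearMap.id) f₂.f n z.1) -
        tc A₁ B₂ (show n - 1 + 1 = n + 1 - 1 by omega) (tD A₁ B₂ (n - 1) z.2.1.2)),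
       -(tc B₁ B₂ (show n - 1 = n + 1 - 2 by omega)
           (tM (fun _ => LinearMap.id) f₂.f (n - 1) z.2.1.1)) +
        tc B₁ B₂ (show n - 1 = n + 1 - 2 by omega)
          (tM f₁.f (fun _ => LinearMap.id) (n - 1) z.2.1.2) +
        tc B₁ B₂ (show n - 2 + 1 = n + 1 - 2 by omega) (tD B₁ B₂ (n - 2) z.2.2)) := rfl

lemma sftD_dd (f₁ : Hom A₁ B₁) (f₂ : Hom A₂ B₂)
    (hA₁ : ∀ n x, A₁.d (n + 1) (A₁.d n x) = 0) (hB₁ : ∀ n x, B₁.d (n + 1) (B₁.d n x) = 0)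
    (hA₂ : ∀ n x, A₂.d (n + 1) (A₂.d n x) = 0) (hB₂ : ∀ n x, B₂.d (n + 1) (B₂.d n x) = 0)
    (n : ℤ) (z : sftX A₁ B₁ A₂ B₂ n) : sftD f₁ f₂ (n + 1) (sftD f₁ f₂ n z) = 0 := by
  have hT₁ : ∀ (m : ℤ) (w : tX A₁ A₂ m), tM f₁.f (fun _ => LinearMap.id) (m + 1)
      (tD A₁ A₂ m w) = tD B₁ A₂ m (tM f₁.f (fun _ => LinearMap.id) m w) :=
    tM_tD _ _ f₁.comm (fun _ _ => rfl)
  have hT₂ : ∀ (m : ℤ) (w : tX A₁ A₂ m), tM (fun _ => LinearMap.id) f₂.f (m + 1)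
      (tD A₁ A₂ m w) = tD A₁ B₂ m (tM (fun _ => LinearMap.id) f₂.f m w) :=
    tM_tD _ _ (fun _ _ => rfl) f₂.comm
  have hT₁' : ∀ (m : ℤ) (w : tX A₁ B₂ m), tM f₁.f (fun _ => LinearMap.id) (m + 1)
      (tD A₁ B₂ m w) = tD B₁ B₂ m (tM f₁.f (fun _ => LinearMap.id) m w) :=
    tM_tD _ _ f₁.comm (fun _ _ => rfl)
  have hT₂' : ∀ (m : ℤ) (w : tX B₁ A₂ m), tM (fun _ => LinearMap.id) f₂.f (m + 1)
      (tD B₁ A₂ m w) = tD B₁ B₂ m (tM (fun _ => LinearMap.id) f₂.f m w) :=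
    tM_tD _ _ (fun _ _ => rfl) f₂.comm
  have hC : ∀ (m : ℤ) (w : tX A₁ A₂ m), tM (fun _ => LinearMap.id) f₂.f m
      (tM f₁.f (fun _ => LinearMap.id) m w) =
      tM f₁.f (fun _ => LinearMap.id) m (tM (fun _ => LinearMap.id) f₂.f m w) := by
    intro m w; rw [tM_tM, tM_tM]; simp
  have hdd₁ := tD_tD A₁ A₂ hA₁ hA₂
  have hdd₂ := tD_tD B₁ A₂ hB₁ hA₂
  have hdd₃ := tD_tD A₁ B₂ hA₁ hB₂
  have hdd₄ := tD_tD B₁ B₂ hB₁ hB₂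
  simp only [sftD_apply]
  rw [show (0 : sftX A₁ B₁ A₂ B₂ (n + 1 + 1)) = (0, (0, 0), 0) from rfl,
    Prod.mk.injEq, Prod.mk.injEq, Prod.mk.injEq]
  refine ⟨hdd₁ n z.1, ⟨?_, ?_⟩, ?_⟩
  · simp [map_sub, tD_tc, tM_tc, tc_tc, hT₁, hdd₂]
  · simp [map_sub, tD_tc, tM_tc, tc_tc, hT₂, hdd₃]
  · simp [map_sub, map_add, map_neg, tD_tc, tM_tc, tc_tc, hT₁', hT₂', hC, hdd₄]

end Helpers5
section Helpers6
variable {R : Type u} [CommRing R] {A₁ B₁ A₂ B₂ : Cplx R}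

lemma rho_lof (f₁ : Hom A₁ B₁) (f₂ : Hom A₂ B₂) (n p : ℤ) (x : (smp f₁).X p)
    (y : (smp f₂).X (n - p)) :
    rho f₁ f₂ n (DirectSum.lof R ℤ (fun q => (smp f₁).X q ⊗[R] (smp f₂).X (n - q)) p
        (x ⊗ₜ[R] y)) =
      (DirectSum.lof R ℤ (fun q => A₁.X q ⊗[R] A₂.X (n - q)) p (x.1 ⊗ₜ[R] y.1),
       ((DirectSum.lof R ℤ (fun q => B₁.X q ⊗[R] A₂.X (n - 1 - q)) (p - 1)
           (x.2 ⊗ₜ[R] (A₂.cE (show n - p = n - 1 - (p - 1) by omega) y.1)),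
         (p.negOnePow : ℤ) •
           DirectSum.lof R ℤ (fun q => A₁.X q ⊗[R] B₂.X (n - 1 - q)) p
             (x.1 ⊗ₜ[R] (B₂.cE (show n - p - 1 = n - 1 - p by omega) y.2))),
        ((p - 1).negOnePow : ℤ) •
          DirectSum.lof R ℤ (fun q => B₁.X q ⊗[R] B₂.X (n - 2 - q)) (p - 1)
            (x.2 ⊗ₜ[R] (B₂.cE (show n - p - 1 = n - 2 - (p - 1) by omega) y.2)))) := by
  rw [rho, DirectSum.toModule_lof]
  rfl

lemma rho_lof_mk (f₁ : Hom A₁ B₁) (f₂ : Hom A₂ B₂) (n p : ℤ) (a : A₁.X p) (b : B₁.X (p - 1))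
    (c : A₂.X (n - p)) (e : B₂.X (n - p - 1)) :
    rho f₁ f₂ n (DirectSum.lof R ℤ (fun q => (smp f₁).X q ⊗[R] (smp f₂).X (n - q)) p
        (((a, b) : (smp f₁).X p) ⊗ₜ[R] ((c, e) : (smp f₂).X (n - p)))) =
      (DirectSum.lof R ℤ (fun q => A₁.X q ⊗[R] A₂.X (n - q)) p (a ⊗ₜ[R] c),
       ((DirectSum.lof R ℤ (fun q => B₁.X q ⊗[R] A₂.X (n - 1 - q)) (p - 1)
           (b ⊗ₜ[R] (A₂.cE (show n - p = n - 1 - (p - 1) by omega) c)),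
         (p.negOnePow : ℤ) •
           DirectSum.lof R ℤ (fun q => A₁.X q ⊗[R] B₂.X (n - 1 - q)) p
             (a ⊗ₜ[R] (B₂.cE (show n - p - 1 = n - 1 - p by omega) e))),
        ((p - 1).negOnePow : ℤ) •
          DirectSum.lof R ℤ (fun q => B₁.X q ⊗[R] B₂.X (n - 2 - q)) (p - 1)
            (b ⊗ₜ[R] (B₂.cE (show n - p - 1 = n - 2 - (p - 1) by omega) e)))) :=
  rho_lof f₁ f₂ n p (a, b) (c, e)

lemma rho_lof_mk' (f₁ : Hom A₁ B₁) (f₂ : Hom A₂ B₂) (n p : ℤ) (x : (smp f₁).X p)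
    (c : A₂.X (n - p)) (e : B₂.X (n - p - 1)) :
    rho f₁ f₂ n (DirectSum.lof R ℤ (fun q => (smp f₁).X q ⊗[R] (smp f₂).X (n - q)) p
        (x ⊗ₜ[R] ((c, e) : (smp f₂).X (n - p)))) =
      (DirectSum.lof R ℤ (fun q => A₁.X q ⊗[R] A₂.X (n - q)) p (x.1 ⊗ₜ[R] c),
       ((DirectSum.lof R ℤ (fun q => B₁.X q ⊗[R] A₂.X (n - 1 - q)) (p - 1)
           (x.2 ⊗ₜ[R] (A₂.cE (show n - p = n - 1 - (p - 1) by omega) c)),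
         (p.negOnePow : ℤ) •
           DirectSum.lof R ℤ (fun q => A₁.X q ⊗[R] B₂.X (n - 1 - q)) p
             (x.1 ⊗ₜ[R] (B₂.cE (show n - p - 1 = n - 1 - p by omega) e))),
        ((p - 1).negOnePow : ℤ) •
          DirectSum.lof R ℤ (fun q => B₁.X q ⊗[R] B₂.X (n - 2 - q)) (p - 1)
            (x.2 ⊗ₜ[R] (B₂.cE (show n - p - 1 = n - 2 - (p - 1) by omega) e)))) :=
  rho_lof f₁ f₂ n p x (c, e)

lemma lof_shift_smp (f₁ : Hom A₁ B₁) (f₂ : Hom A₂ B₂) (m : ℤ) {i j : ℤ} (h : i = j)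
    (a : A₁.X i) (b : B₁.X (i - 1)) (c : A₂.X (m - i)) (e : B₂.X (m - i - 1)) :
    DirectSum.lof R ℤ (fun q => (smp f₁).X q ⊗[R] (smp f₂).X (m - q)) i
        (((a, b) : (smp f₁).X i) ⊗ₜ ((c, e) : (smp f₂).X (m - i))) =
      DirectSum.lof R ℤ (fun q => (smp f₁).X q ⊗[R] (smp f₂).X (m - q)) j
        ((smp f₁).cE h ((a, b) : (smp f₁).X i) ⊗ₜ
          (smp f₂).cE (show m - i = m - j by omega) ((c, e) : (smp f₂).X (m - i))) :=
  lof_shift (smp f₁) (smp f₂) m h (a, b) (c, e)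

@[simp] lemma smp_cE_mk {A B : Cplx R} (φ : Hom A B) {i j : ℤ} (h : i = j) (a : A.X i)
    (b : B.X (i - 1)) :
    (smp φ).cE h ((a, b) : (smp φ).X i) = (A.cE h a, B.cE (show i - 1 = j - 1 by omega) b) := by
  cases h; rfl

end Helpers6
section Helpers7
variable {R : Type u} [CommRing R] {A₁ B₁ A₂ B₂ : Cplx R}

@[simp] lemma negOnePow_sq (p : ℤ) : (p.negOnePow : ℤ) * (p.negOnePow : ℤ) = 1 := by
  rw [← Units.val_mul, Int.units_mul_self, Units.val_one]

set_option maxHeartbeats 2000000 in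
lemma rho_comm (f₁ : Hom A₁ B₁) (f₂ : Hom A₂ B₂) (n : ℤ) (z : tX (smp f₁) (smp f₂) n) :
    rho f₁ f₂ (n + 1) (tD (smp f₁) (smp f₂) n z) = sftD f₁ f₂ n (rho f₁ f₂ n z) := by
  have : (rho f₁ f₂ (n + 1)).comp (tD (smp f₁) (smp f₂) n) =
      (sftD f₁ f₂ n).comp (rho f₁ f₂ n) := by
    apply DirectSum.linearMap_ext
    intro p
    apply TensorProduct.ext'
    intro x y
    simp only [LinearMap.comp_apply, tD_lof, map_add, map_smul, map_zsmul, map_neg, rho_lof,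
      smp_d, smp_cE, smp_cE_mk, rho_lof_mk, rho_lof_mk', sftD_apply, Prod.fst, Prod.snd, tM_lof, tc_lof, TensorProduct.map_tmul,
      Prod.mk.injEq, Prod.smul_mk, Prod.mk_add_mk, LinearMap.id_apply, cE_cE, f_cE, d_cE,
      map_sub, TensorProduct.tmul_sub, TensorProduct.sub_tmul, Int.negOnePow_succ,
      negOnePow_pred, Units.val_neg, neg_smul, smul_neg, neg_neg, smul_smul,
      negOnePow_sq, one_smul, cE_refl]
    simp only [lof_shift B₁ A₂ (n + 1 - 1) (show p + 1 - 1 = p by omega),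
      lof_shift B₁ B₂ (n + 1 - 2) (show p + 1 - 1 = p by omega),
      lof_shift B₁ A₂ (n + 1 - 1) (show p - 1 + 1 = p by omega),
      lof_shift B₁ B₂ (n + 1 - 2) (show p - 1 + 1 = p by omega),
      lof_shift A₁ B₂ (n + 1 - 1) (show p + 1 - 1 = p by omega),
      lof_shift A₁ A₂ (n + 1) (show p + 1 - 1 = p by omega)]
    simp only [cE_cE, cE_refl, LinearMap.id_apply, map_sub, TensorProduct.tmul_sub,
      TensorProduct.sub_tmul, f_cE, d_cE]
    simp only [smul_add, smul_sub, smul_smul, negOnePow_sq, one_smul, smul_neg, neg_neg]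
    and_intros <;> first | trivial | abel
  exact DFunLike.congr_fun this z

end Helpers7
section Helpers8
variable {R : Type u} [CommRing R] {A₁ B₁ A₂ B₂ : Cplx R}

/-- inclusion of the first factor in `s(φ)^p` -/
def j₁ {A B : Cplx R} (φ : Hom A B) (p : ℤ) : A.X p →ₗ[R] (smp φ).X p :=
  LinearMap.inl R (A.X p) (B.X (p - 1))

/-- inclusion of the second factor in `s(φ)^p` -/
def j₂ {A B : Cplx R} (φ : Hom A B) (p : ℤ) : B.X (p - 1) →ₗ[R] (smp φ).X p :=
  LinearMap.inr R (A.X p) (B.X (p - 1))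

/-- The inverse of `rho`. -/
def sig (f₁ : Hom A₁ B₁) (f₂ : Hom A₂ B₂) (n : ℤ) :
    sftX A₁ B₁ A₂ B₂ n →ₗ[R] tX (smp f₁) (smp f₂) n :=
  let L := fun q => (smp f₁).X q ⊗[R] (smp f₂).X (n - q)
  let P1 := LinearMap.fst R (tX A₁ A₂ n)
    ((tX B₁ A₂ (n - 1) × tX A₁ B₂ (n - 1)) × tX B₁ B₂ (n - 2))
  let Pr := LinearMap.snd R (tX A₁ A₂ n)
    ((tX B₁ A₂ (n - 1) × tX A₁ B₂ (n - 1)) × tX B₁ B₂ (n - 2))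
  let P2 := (LinearMap.fst R (tX B₁ A₂ (n - 1)) (tX A₁ B₂ (n - 1))).comp
    ((LinearMap.fst R (tX B₁ A₂ (n - 1) × tX A₁ B₂ (n - 1)) (tX B₁ B₂ (n - 2))).comp Pr)
  let P3 := (LinearMap.snd R (tX B₁ A₂ (n - 1)) (tX A₁ B₂ (n - 1))).comp
    ((LinearMap.fst R (tX B₁ A₂ (n - 1) × tX A₁ B₂ (n - 1)) (tX B₁ B₂ (n - 2))).comp Pr)
  let P4 := (LinearMap.snd R (tX B₁ A₂ (n - 1) × tX A₁ B₂ (n - 1)) (tX B₁ B₂ (n - 2))).comp Pr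
  let S1 := DirectSum.toModule R ℤ (tX (smp f₁) (smp f₂) n) fun p =>
    (DirectSum.lof R ℤ L p).comp (TensorProduct.map (j₁ f₁ p) (j₁ f₂ (n - p)))
  let S2 := DirectSum.toModule R ℤ (tX (smp f₁) (smp f₂) n) fun q =>
    (DirectSum.lof R ℤ L (q + 1)).comp (TensorProduct.map
      ((j₂ f₁ (q + 1)).comp (B₁.cE (show q = q + 1 - 1 by omega)))
      ((j₁ f₂ (n - (q + 1))).comp (A₂.cE (show n - 1 - q = n - (q + 1) by omega))))
  let S3 := DirectSum.toModule R ℤ (tX (smp f₁) (smp f₂) n) fun p =>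
    (p.negOnePow : ℤ) • ((DirectSum.lof R ℤ L p).comp (TensorProduct.map (j₁ f₁ p)
      ((j₂ f₂ (n - p)).comp (B₂.cE (show n - 1 - p = n - p - 1 by omega)))))
  let S4 := DirectSum.toModule R ℤ (tX (smp f₁) (smp f₂) n) fun q =>
    (q.negOnePow : ℤ) • ((DirectSum.lof R ℤ L (q + 1)).comp (TensorProduct.map
      ((j₂ f₁ (q + 1)).comp (B₁.cE (show q = q + 1 - 1 by omega)))
      ((j₂ f₂ (n - (q + 1))).comp (B₂.cE (show n - 2 - q = n - (q + 1) - 1 by omega)))))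
  S1.comp P1 + S2.comp P2 + S3.comp P3 + S4.comp P4

lemma smp_decomp {A B : Cplx R} (φ : Hom A B) (p : ℤ) (x : (smp φ).X p) :
    HAdd.hAdd (α := (smp φ).X p) (β := (smp φ).X p) (γ := (smp φ).X p) (x.1, 0) (0, x.2) = x := by
  show ((x.1 + 0, 0 + x.2) : A.X p × B.X (p - 1)) = x
  simp
  rfl

end Helpers8
section Helpers9
variable {R : Type u} [CommRing R] {A₁ B₁ A₂ B₂ : Cplx R}

@[simp] lemma j₁_apply {A B : Cplx R} (φ : Hom A B) (p : ℤ) (a : A.X p) :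
    j₁ φ p a = ((a, 0) : (smp φ).X p) := rfl

@[simp] lemma j₂_apply {A B : Cplx R} (φ : Hom A B) (p : ℤ) (b : B.X (p - 1)) :
    j₂ φ p b = ((0, b) : (smp φ).X p) := rfl

lemma sig_rho (f₁ : Hom A₁ B₁) (f₂ : Hom A₂ B₂) (n : ℤ) :
    (sig f₁ f₂ n).comp (rho f₁ f₂ n) = LinearMap.id := by
  apply DirectSum.linearMap_ext
  intro p
  apply TensorProduct.ext'
  intro x y
  simp only [LinearMap.comp_apply, LinearMap.id_apply, rho_lof, rho_lof_mk, rho_lof_mk', sig, LinearMap.add_apply,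
    LinearMap.fst_apply, LinearMap.snd_apply, map_add, map_zsmul, map_neg, map_smul,
    DirectSum.toModule_lof, TensorProduct.map_tmul, LinearMap.smul_apply,
    LinearMap.neg_apply, j₁_apply, j₂_apply, cE_cE, cE_refl, LinearMap.id_apply,
    smul_smul, negOnePow_sq, one_smul, negOnePow_pred, Units.val_neg, neg_smul, neg_neg,
    smul_neg]
  rw [lof_shift_smp f₁ f₂ n (show p - 1 + 1 = p by omega),
    lof_shift_smp f₁ f₂ n (show p - 1 + 1 = p by omega)]
  simp only [smp_cE, smp_cE_mk, map_zero,
    cE_cE, cE_refl, LinearMap.id_apply]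
  conv_rhs => rw [← smp_decomp f₁ p x, ← smp_decomp f₂ (n - p) y]
  erw [TensorProduct.add_tmul, TensorProduct.tmul_add, TensorProduct.tmul_add]
  simp only [TensorProduct.add_tmul, TensorProduct.tmul_add, map_add]
  abel

end Helpers9
section Helpers10
variable {R : Type u} [CommRing R] {A₁ B₁ A₂ B₂ : Cplx R}

set_option maxHeartbeats 1000000 in
lemma rho_sig (f₁ : Hom A₁ B₁) (f₂ : Hom A₂ B₂) (n : ℤ) :
    (rho f₁ f₂ n).comp (sig f₁ f₂ n) = LinearMap.id := by
  apply LinearMap.prod_ext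
  · apply DirectSum.linearMap_ext
    intro p
    apply TensorProduct.ext'
    intro a c
    simp only [LinearMap.comp_apply, LinearMap.inl_apply, LinearMap.inr_apply,
      LinearMap.id_apply, sig, LinearMap.add_apply, LinearMap.fst_apply, LinearMap.snd_apply,
      map_zero, add_zero, zero_add, DirectSum.toModule_lof, TensorProduct.map_tmul,
      j₁_apply, j₂_apply, rho_lof, rho_lof_mk, rho_lof_mk', TensorProduct.tmul_zero, TensorProduct.zero_tmul,
      smul_zero, Prod.mk.injEq, LinearMap.smul_apply, LinearMap.neg_apply]
    exact ⟨trivial, rfl⟩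
  · apply LinearMap.prod_ext
    · apply LinearMap.prod_ext
      · apply DirectSum.linearMap_ext
        intro q
        apply TensorProduct.ext'
        intro b c
        simp only [LinearMap.comp_apply, LinearMap.inl_apply, LinearMap.inr_apply,
          LinearMap.id_apply, sig, LinearMap.add_apply, LinearMap.fst_apply,
          LinearMap.snd_apply, map_zero, add_zero, zero_add, DirectSum.toModule_lof,
          TensorProduct.map_tmul, j₁_apply, j₂_apply, rho_lof, rho_lof_mk, rho_lof_mk', TensorProduct.tmul_zero,
          TensorProduct.zero_tmul, smul_zero, LinearMap.smul_apply, LinearMap.neg_apply,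
          cE_cE, cE_refl]
        simp only [lof_shift B₁ A₂ (n - 1) (show q + 1 - 1 = q by omega), cE_cE, cE_refl,
          LinearMap.id_apply, Prod.mk.injEq]
      · apply DirectSum.linearMap_ext
        intro p
        apply TensorProduct.ext'
        intro a e
        simp only [LinearMap.comp_apply, LinearMap.inl_apply, LinearMap.inr_apply,
          LinearMap.id_apply, sig, LinearMap.add_apply, LinearMap.fst_apply,
          LinearMap.snd_apply, map_zero, add_zero, zero_add, DirectSum.toModule_lof,
          TensorProduct.map_tmul, j₁_apply, j₂_apply, map_zsmul, map_smul, rho_lof, rho_lof_mk, rho_lof_mk',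
          TensorProduct.tmul_zero, TensorProduct.zero_tmul, smul_zero,
          LinearMap.smul_apply, LinearMap.neg_apply, cE_cE, cE_refl, LinearMap.id_apply,
          smul_smul, negOnePow_sq, one_smul, Prod.smul_mk, Prod.mk.injEq]
    · apply DirectSum.linearMap_ext
      intro q
      apply TensorProduct.ext'
      intro b e
      simp only [LinearMap.comp_apply, LinearMap.inl_apply, LinearMap.inr_apply,
        LinearMap.id_apply, sig, LinearMap.add_apply, LinearMap.fst_apply,
        LinearMap.snd_apply, map_zero, add_zero, zero_add, DirectSum.toModule_lof,
        TensorProduct.map_tmul, j₁_apply, j₂_apply, map_zsmul, map_smul, rho_lof, rho_lof_mk, rho_lof_mk',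
        TensorProduct.tmul_zero, TensorProduct.zero_tmul, smul_zero,
        LinearMap.smul_apply, LinearMap.neg_apply, cE_cE, cE_refl, LinearMap.id_apply,
        smul_smul, negOnePow_sq, one_smul, negOnePow_pred, Units.val_neg, neg_smul,
        neg_neg, smul_neg, Prod.smul_mk, Prod.mk.injEq]
      simp only [lof_shift B₁ B₂ (n - 2) (show q + 1 - 1 = q by omega), cE_cE, cE_refl,
        LinearMap.id_apply, smul_smul, negOnePow_sq, one_smul, Prod.mk.injEq,
        Int.negOnePow_succ, Units.val_neg, neg_smul, neg_neg, mul_neg, smul_neg]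
      and_intros <;> trivial

end Helpers10

section Statement14

variable {A₁ B₁ A₂ B₂ : Cplx R}

/-- **Statement 14.**  For morphisms of complexes `f₁ : A₁ → B₁` and `f₂ : A₂ → B₂`, the
`R`-linear map `s(f₁) ⊗ s(f₂) → s(f₁ ⊗ f₂)` sending a homogeneous tensor
`(a₁,b₁) ⊗ (a₂,b₂)` (with `(a₁,b₁) ∈ s(f₁)^p`) to
`(a₁⊗a₂, (b₁⊗a₂, (-1)^p a₁⊗b₂), (-1)^{p-1} b₁⊗b₂)` is an isomorphism of complexes. -/
theorem statement14 (f₁ : Hom A₁ B₁) (f₂ : Hom A₂ B₂)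
    (hA₁ : ∀ n x, A₁.d (n + 1) (A₁.d n x) = 0) (hB₁ : ∀ n x, B₁.d (n + 1) (B₁.d n x) = 0)
    (hA₂ : ∀ n x, A₂.d (n + 1) (A₂.d n x) = 0) (hB₂ : ∀ n x, B₂.d (n + 1) (B₂.d n x) = 0) :
    -- `s(f₁) ⊗ s(f₂)` and `s(f₁ ⊗ f₂)` are complexes
    (∀ n z, tD (smp f₁) (smp f₂) (n + 1) (tD (smp f₁) (smp f₂) n z) = 0) ∧
    (∀ n z, sftD f₁ f₂ (n + 1) (sftD f₁ f₂ n z) = 0) ∧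
    -- the map is given on homogeneous tensors by the asserted formula ...
    (∀ (n p : ℤ) (x : (smp f₁).X p) (y : (smp f₂).X (n - p)),
      rho f₁ f₂ n
          (DirectSum.lof R ℤ (fun q => (smp f₁).X q ⊗[R] (smp f₂).X (n - q)) p
            (x ⊗ₜ[R] y)) =
        (DirectSum.lof R ℤ (fun q => A₁.X q ⊗[R] A₂.X (n - q)) p (x.1 ⊗ₜ[R] y.1),
         ((DirectSum.lof R ℤ (fun q => B₁.X q ⊗[R] A₂.X (n - 1 - q)) (p - 1)
             (x.2 ⊗ₜ[R] (A₂.cE (show n - p = n - 1 - (p - 1) by omega) y.1)),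
           (p.negOnePow : ℤ) •
             DirectSum.lof R ℤ (fun q => A₁.X q ⊗[R] B₂.X (n - 1 - q)) p
               (x.1 ⊗ₜ[R] (B₂.cE (show n - p - 1 = n - 1 - p by omega) y.2))),
          ((p - 1).negOnePow : ℤ) •
            DirectSum.lof R ℤ (fun q => B₁.X q ⊗[R] B₂.X (n - 2 - q)) (p - 1)
              (x.2 ⊗ₜ[R] (B₂.cE (show n - p - 1 = n - 2 - (p - 1) by omega) y.2))))) ∧
    -- ... it is a morphism of complexes ...
    (∀ (n : ℤ) (z : tX (smp f₁) (smp f₂) n),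
      rho f₁ f₂ (n + 1) (tD (smp f₁) (smp f₂) n z) = sftD f₁ f₂ n (rho f₁ f₂ n z)) ∧
    -- ... and an isomorphism
    (∀ n : ℤ, Function.Bijective (rho f₁ f₂ n)) := by
  have bij : ∀ n : ℤ, Function.Bijective (rho f₁ f₂ n) := by
    intro n
    exact Function.bijective_iff_has_inverse.mpr ⟨sig f₁ f₂ n,
      fun z => DFunLike.congr_fun (sig_rho f₁ f₂ n) z,
      fun z => DFunLike.congr_fun (rho_sig f₁ f₂ n) z⟩
  exact ⟨tD_tD (smp f₁) (smp f₂) (smp_dd f₁ hA₁ hB₁) (smp_dd f₂ hA₂ hB₂),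
    sftD_dd f₁ f₂ hA₁ hB₁ hA₂ hB₂,
    fun n p x y => rho_lof f₁ f₂ n p x y,
    rho_comm f₁ f₂, bij⟩

end Statement14

end
end

section
/- Let f₁ : A₁ → B₁ and f₂ : A₂ → B₂ be morphisms of complexes. Let α₁ : s(f₁)⊗s(f₂) → s(f₁⊗f₂) and β₁ : s(f₂)⊗s(f₁) → s(f₂⊗f₁) be the canonical isomorphisms (sending (a₁,b₁)⊗(a₂,b₂) with degrees n, m to (a₁⊗a₂, (b₁⊗a₂, (−1)^n a₁⊗b₂), (−1)^{n−1} b₁⊗b₂)). Let α₂ : s(f₁)⊗s(f₂) → s(f₂)⊗s(f₁) be the Koszul braiding x⊗y ↦ (−1)^{deg x · deg y} y⊗x, and let β₂ : s(f₁⊗f₂) → s(f₂⊗f₁) be the map determined on homogeneous tensors (with deg a₁ = n, deg b₁ = n−1 in A₁, B₁ and deg a₂ = m, deg b₂ = m−1 in A₂, B₂) by β₂(a₁⊗a₂, (b₁⊗a₂, a₁⊗b₂), b₁⊗b₂) = ((−1)^{nm} a₂⊗a₁, ((−1)^{n(m−1)} b₂⊗a₁, (−1)^{(n−1)m} a₂⊗b₁),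 (−1)^{nm−n−m} b₂⊗b₁). Then β₂ is a well-defined isomorphism of complexes and the square commutes: β₂∘α₁ = β₁∘α₂. -/
noncomputable section

open DirectSum
open scoped TensorProduct

universe u v

variable {R : Type u} [CommRing R]

section Statement15

/-- The Koszul braiding `A ⊗ B → B ⊗ A`, `x ⊗ y ↦ (-1)^{pq} y ⊗ x` on homogeneous
elements of bidegree `(p,q)`. -/
def braid (A B : Cplx R) (n : ℤ) : tX A B n →ₗ[R] tX B A n :=
  DirectSum.toModule R ℤ (tX B A n) fun p =>
    ((p * (n - p)).negOnePow : ℤ) •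
      ((DirectSum.lof R ℤ (fun q => B.X q ⊗[R] A.X (n - q)) (n - p)).comp
        ((TensorProduct.map LinearMap.id (A.cE (show p = n - (n - p) by omega))).comp
          (TensorProduct.comm R (A.X p) (B.X (n - p))).toLinearMap))

variable {A₁ B₁ A₂ B₂ : Cplx R}

/-- The map `β₂ : s(f₁ ⊗ f₂) → s(f₂ ⊗ f₁)`. -/
def beta2 (n : ℤ) : sftX A₁ B₁ A₂ B₂ n →ₗ[R] sftX A₂ B₂ A₁ B₁ n :=
  let P1 := LinearMap.fst R (tX A₁ A₂ n)
    ((tX B₁ A₂ (n - 1) × tX A₁ B₂ (n - 1)) × tX B₁ B₂ (n - 2))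
  let Pr := LinearMap.snd R (tX A₁ A₂ n)
    ((tX B₁ A₂ (n - 1) × tX A₁ B₂ (n - 1)) × tX B₁ B₂ (n - 2))
  let P2 := (LinearMap.fst R (tX B₁ A₂ (n - 1)) (tX A₁ B₂ (n - 1))).comp
    ((LinearMap.fst R (tX B₁ A₂ (n - 1) × tX A₁ B₂ (n - 1)) (tX B₁ B₂ (n - 2))).comp Pr)
  let P3 := (LinearMap.snd R (tX B₁ A₂ (n - 1)) (tX A₁ B₂ (n - 1))).comp
    ((LinearMap.fst R (tX B₁ A₂ (n - 1) × tX A₁ B₂ (n - 1)) (tX B₁ B₂ (n - 2))).comp Pr)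
  let P4 := (LinearMap.snd R (tX B₁ A₂ (n - 1) × tX A₁ B₂ (n - 1)) (tX B₁ B₂ (n - 2))).comp Pr
  ((braid A₁ A₂ n).comp P1).prod
    ((((braid A₁ B₂ (n - 1)).comp P3).prod ((braid B₁ A₂ (n - 1)).comp P2)).prod
      (-((braid B₁ B₂ (n - 2)).comp P4)))

namespace Helpers
open DirectSum
open scoped TensorProduct
variable {R : Type u} [CommRing R]

lemma sign_congr {a b : ℤ} (h : (a - b) % 2 = 0) : a.negOnePow = b.negOnePow := by
  rw [Int.negOnePow_eq_iff, Int.even_iff]; omega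

lemma cE_cE (A : Cplx R) {i j k : ℤ} (h1 : i = j) (h2 : j = k) (x : A.X i) :
    A.cE h2 (A.cE h1 x) = A.cE (h1.trans h2) x := by subst h1 h2; rfl

lemma cE_rfl (A : Cplx R) {i : ℤ} (h : i = i) (x : A.X i) : A.cE h x = x := rfl

lemma cE_d (A : Cplx R) {i j : ℤ} (h : i = j) (h' : i + 1 = j + 1) (x : A.X i) :
    A.d j (A.cE h x) = A.cE h' (A.d i x) := by subst h; rfl

lemma braid_lof (A B : Cplx R) (n p : ℤ) (x : A.X p) (y : B.X (n - p)) :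
    braid A B n (DirectSum.lof R ℤ (fun q => A.X q ⊗[R] B.X (n - q)) p (x ⊗ₜ[R] y)) =
      ((p * (n - p)).negOnePow : ℤ) •
        DirectSum.lof R ℤ (fun q => B.X q ⊗[R] A.X (n - q)) (n - p)
          (y ⊗ₜ[R] A.cE (show p = n - (n - p) by omega) x) := by
  simp [braid, DirectSum.toModule_lof]

lemma tD_lof (A B : Cplx R) (n p : ℤ) (x : A.X p) (y : B.X (n - p)) :
    tD A B n (DirectSum.lof R ℤ (fun q => A.X q ⊗[R] B.X (n - q)) p (x ⊗ₜ[R] y)) =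
      DirectSum.lof R ℤ (fun q => A.X q ⊗[R] B.X (n + 1 - q)) (p + 1)
        (A.d p x ⊗ₜ[R] B.cE (show n - p = n + 1 - (p + 1) by omega) y) +
      (p.negOnePow : ℤ) •
        DirectSum.lof R ℤ (fun q => A.X q ⊗[R] B.X (n + 1 - q)) p
          (x ⊗ₜ[R] B.cE (show n - p + 1 = n + 1 - p by omega) (B.d (n - p) y)) := by
  simp [tD, DirectSum.toModule_lof]

lemma tM_lof {A A' B B' : Cplx R} (φ : ∀ n, A.X n →ₗ[R] A'.X n)
    (ψ : ∀ n, B.X n →ₗ[R] B'.X n) (n p : ℤ) (x : A.X p) (y : B.X (n - p)) :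
    tM φ ψ n (DirectSum.lof R ℤ (fun q => A.X q ⊗[R] B.X (n - q)) p (x ⊗ₜ[R] y)) =
      DirectSum.lof R ℤ (fun q => A'.X q ⊗[R] B'.X (n - q)) p (φ p x ⊗ₜ[R] ψ (n - p) y) := by
  simp [tM, DirectSum.toModule_lof]

lemma lof_eq (C D : Cplx R) (m : ℤ) {i j : ℤ} (h : i = j) (h' : m - i = m - j)
    (x : C.X i) (y : D.X (m - i)) :
    DirectSum.lof R ℤ (fun q => C.X q ⊗[R] D.X (m - q)) j (C.cE h x ⊗ₜ[R] D.cE h' y) =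
      DirectSum.lof R ℤ (fun q => C.X q ⊗[R] D.X (m - q)) i (x ⊗ₜ[R] y) := by
  subst h; rfl

lemma tc_braid (A B : Cplx R) {i j : ℤ} (h : i = j) (z : tX A B i) :
    braid A B j (tc A B h z) = tc B A h (braid A B i z) := by subst h; rfl

lemma tc_tM {A A' B B' : Cplx R} (φ : ∀ n, A.X n →ₗ[R] A'.X n)
    (ψ : ∀ n, B.X n →ₗ[R] B'.X n) {i j : ℤ} (h : i = j) (z : tX A B i) :
    tM φ ψ j (tc A B h z) = tc A' B' h (tM φ ψ i z) := by subst h; rfl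

lemma tc_tc (A B : Cplx R) {i j k : ℤ} (h1 : i = j) (h2 : j = k) (z : tX A B i) :
    tc A B h2 (tc A B h1 z) = tc A B (h1.trans h2) z := by subst h1 h2; rfl

lemma tc_rfl (A B : Cplx R) {i : ℤ} (h : i = i) (z : tX A B i) : tc A B h z = z := rfl

end Helpers
namespace Helpers
open DirectSum
open scoped TensorProduct
variable {R : Type u} [CommRing R]

/-- Canonical insertion of a pure tensor into the tensor complex. -/
def iot (C D : Cplx R) (m : ℤ) {i j : ℤ} (h : j = m - i) (x : C.X i) (y : D.X j) :
    tX C D m :=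
  DirectSum.lof R ℤ (fun q => C.X q ⊗[R] D.X (m - q)) i (x ⊗ₜ[R] D.cE h y)

lemma lof_eq_iot (C D : Cplx R) (m p : ℤ) (x : C.X p) (y : D.X (m - p)) :
    DirectSum.lof R ℤ (fun q => C.X q ⊗[R] D.X (m - q)) p (x ⊗ₜ[R] y) =
      iot C D m rfl x y := rfl

lemma iot_cE (C D : Cplx R) (m : ℤ) {i i' j j' : ℤ} (e : i = i') (e' : j = j')
    (h : j' = m - i') (h' : j = m - i) (x : C.X i) (y : D.X j) :
    iot C D m h (C.cE e x) (D.cE e' y) = iot C D m h' x y := by subst e e'; rfl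

lemma braid_iot (C D : Cplx R) (m : ℤ) {i j : ℤ} (h : j = m - i) (h' : i = m - j)
    (x : C.X i) (y : D.X j) :
    braid C D m (iot C D m h x y) =
      ((i * j).negOnePow : ℤ) • iot D C m h' y x := by
  subst h; rw [iot, braid_lof, iot]; rfl

lemma tD_iot (C D : Cplx R) (m : ℤ) {i j : ℤ} (h : j = m - i)
    (h₁ : j = m + 1 - (i + 1)) (h₂ : j + 1 = m + 1 - i) (x : C.X i) (y : D.X j) :
    tD C D m (iot C D m h x y) =
      iot C D (m + 1) h₁ (C.d i x) y +
        (i.negOnePow : ℤ) • iot C D (m + 1) h₂ x (D.d j y) := by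
  subst h; rw [iot, tD_lof]; rfl

lemma tM_iot {A A' B B' : Cplx R} (φ : ∀ n, A.X n →ₗ[R] A'.X n)
    (ψ : ∀ n, B.X n →ₗ[R] B'.X n) (m : ℤ) {i j : ℤ} (h : j = m - i)
    (x : A.X i) (y : B.X j) :
    tM φ ψ m (iot A B m h x y) = iot A' B' m h (φ i x) (ψ j y) := by
  subst h; rw [iot, tM_lof]; rfl

lemma tc_iot (C D : Cplx R) {m m' : ℤ} (e : m = m') {i j : ℤ} (h : j = m - i)
    (h' : j = m' - i) (x : C.X i) (y : D.X j) :
    tc C D e (iot C D m h x y) = iot C D m' h' x y := by subst e; rfl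

lemma tX_ext {A B : Cplx R} {n : ℤ} {M : Type _} [AddCommGroup M] [Module R M]
    {F G : tX A B n →ₗ[R] M}
    (h : ∀ (p : ℤ) (x : A.X p) (y : B.X (n - p)),
      F (DirectSum.lof R ℤ (fun q => A.X q ⊗[R] B.X (n - q)) p (x ⊗ₜ[R] y)) =
      G (DirectSum.lof R ℤ (fun q => A.X q ⊗[R] B.X (n - q)) p (x ⊗ₜ[R] y))) :
    F = G := by
  apply DirectSum.linearMap_ext
  intro p
  apply TensorProduct.ext'
  intro x y
  simpa using h p x y

lemma braid_tM {A A' B B' : Cplx R} (φ : ∀ n, A.X n →ₗ[R] A'.X n)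
    (ψ : ∀ n, B.X n →ₗ[R] B'.X n) (n : ℤ) (z : tX A B n) :
    braid A' B' n (tM φ ψ n z) = tM ψ φ n (braid A B n z) := by
  have : (braid A' B' n).comp (tM φ ψ n) = (tM ψ φ n).comp (braid A B n) := by
    apply tX_ext
    intro p x y
    rw [LinearMap.comp_apply, LinearMap.comp_apply, lof_eq_iot,
      tM_iot φ ψ n rfl, braid_iot A' B' n rfl (show p = n - (n - p) by omega),
      braid_iot A B n rfl (show p = n - (n - p) by omega), map_zsmul,
      tM_iot ψ φ n (show p = n - (n - p) by omega)]
  exact LinearMap.congr_fun this z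

lemma braid_tD (A B : Cplx R) (n : ℤ) (z : tX A B n) :
    braid A B (n + 1) (tD A B n z) = tD B A n (braid A B n z) := by
  have : (braid A B (n + 1)).comp (tD A B n) = (tD B A n).comp (braid A B n) := by
    apply tX_ext
    intro p x y
    rw [LinearMap.comp_apply, LinearMap.comp_apply, lof_eq_iot,
      tD_iot A B n rfl (show n - p = n + 1 - (p + 1) by omega)
        (show n - p + 1 = n + 1 - p by omega),
      map_add, map_zsmul,
      braid_iot A B (n+1) _ (show p + 1 = n + 1 - (n - p) by omega),
      braid_iot A B (n+1) _ (show p = n + 1 - (n - p + 1) by omega),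
      braid_iot A B n rfl (show p = n - (n - p) by omega), map_zsmul,
      tD_iot B A n (show p = n - (n - p) by omega)
        (show p = n + 1 - (n - p + 1) by omega) (show p + 1 = n + 1 - (n - p) by omega)]
    rw [smul_add, smul_smul]
    rw [show ((p.negOnePow : ℤ) * ((p * (n - p + 1)).negOnePow : ℤ)) = ((p * (n-p)).negOnePow : ℤ) by
        rw [← Units.val_mul, ← Int.negOnePow_add,
          show p + p * (n - p + 1) = p*(n-p) + 2*p by ring,
          Int.negOnePow_add, Int.negOnePow_two_mul, mul_one], smul_smul,
      show (((p * (n - p)).negOnePow : ℤ) * ((n - p).negOnePow : ℤ)) = (((p+1) * (n-p)).negOnePow : ℤ) by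
        rw [← Units.val_mul, ← Int.negOnePow_add, show p * (n - p) + (n - p) = (p+1)*(n-p) by ring]]
    exact add_comm _ _
  exact LinearMap.congr_fun this z

end Helpers
namespace Helpers
open DirectSum
open scoped TensorProduct
variable {R : Type u} [CommRing R]

lemma zsign_congr {a b : ℤ} (h : (a - b) % 2 = 0) :
    ((a.negOnePow : ℤ)) = (b.negOnePow : ℤ) := congrArg _ (sign_congr h)

lemma zsign_mul (a b : ℤ) :
    ((a.negOnePow : ℤ)) * ((b.negOnePow : ℤ)) = (((a + b).negOnePow : ℤ)) := by
  rw [← Units.val_mul, ← Int.negOnePow_add]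

lemma iot_cE_left (C D : Cplx R) (m : ℤ) {i i' j : ℤ} (e : i = i')
    (h : j = m - i') (h' : j = m - i) (x : C.X i) (y : D.X j) :
    iot C D m h (C.cE e x) y = iot C D m h' x y := by subst e; rfl

lemma iot_cE_right (C D : Cplx R) (m : ℤ) {i j j' : ℤ} (e : j = j')
    (h : j' = m - i) (h' : j = m - i) (x : C.X i) (y : D.X j) :
    iot C D m h x (D.cE e y) = iot C D m h' x y := by subst e; rfl

lemma braid_braid (A B : Cplx R) (n : ℤ) (z : tX A B n) :
    braid B A n (braid A B n z) = z := by
  have : (braid B A n).comp (braid A B n) = LinearMap.id := by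
    apply tX_ext
    intro p x y
    rw [LinearMap.comp_apply, lof_eq_iot, braid_iot A B n rfl (show p = n - (n - p) by omega),
      map_zsmul, braid_iot B A n _ (show n - p = n - p by omega), smul_smul, zsign_mul,
      show ((p * (n - p) + (n - p) * p).negOnePow : ℤ) = ((2 * (p * (n-p))).negOnePow : ℤ) by
        rw [show p * (n - p) + (n - p) * p = 2 * (p * (n - p)) by ring],
      Int.negOnePow_two_mul, Units.val_one, one_smul, LinearMap.id_apply]
  exact LinearMap.congr_fun this z

variable {A₁ B₁ A₂ B₂ : Cplx R}

lemma beta2_apply (n : ℤ) (z1 : tX A₁ A₂ n) (z2 : tX B₁ A₂ (n-1)) (z3 : tX A₁ B₂ (n-1))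
    (z4 : tX B₁ B₂ (n-2)) :
    beta2 n ((z1, (z2, z3), z4) : sftX A₁ B₁ A₂ B₂ n) =
      (braid A₁ A₂ n z1, ((braid A₁ B₂ (n-1) z3, braid B₁ A₂ (n-1) z2),
        -(braid B₁ B₂ (n-2) z4))) := rfl

lemma smp_cE {A B : Cplx R} (φ : Hom A B) {i j : ℤ} (h : i = j) (h' : i - 1 = j - 1)
    (x : (smp φ).X i) :
    (smp φ).cE h x = (A.cE h x.1, B.cE h' x.2) := by subst h; rfl

lemma rho_lof (f₁ : Hom A₁ B₁) (f₂ : Hom A₂ B₂) (n p : ℤ)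
    (x : (smp f₁).X p) (y : (smp f₂).X (n - p)) :
    rho f₁ f₂ n (DirectSum.lof R ℤ (fun q => (smp f₁).X q ⊗[R] (smp f₂).X (n - q)) p
        (x ⊗ₜ[R] y)) =
      (iot A₁ A₂ n rfl x.1 y.1,
        (iot B₁ A₂ (n-1) (show n - p = n - 1 - (p-1) by omega) x.2 y.1,
         (p.negOnePow : ℤ) • iot A₁ B₂ (n-1) (show n - p - 1 = n - 1 - p by omega) x.1 y.2),
        ((p-1).negOnePow : ℤ) •
          iot B₁ B₂ (n-2) (show n - p - 1 = n - 2 - (p-1) by omega) x.2 y.2) := by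
  rw [rho, DirectSum.toModule_lof]
  rfl

end Helpers
namespace Helpers
open DirectSum
open scoped TensorProduct
variable {R : Type u} [CommRing R] {A₁ B₁ A₂ B₂ : Cplx R}

lemma zsign_neg (a : ℤ) : -((a.negOnePow : ℤ)) = (((a + 1).negOnePow : ℤ)) := by
  rw [Int.negOnePow_succ, Units.val_neg]

lemma sftD_apply (f₁ : Hom A₁ B₁) (f₂ : Hom A₂ B₂) (n : ℤ) (z1 : tX A₁ A₂ n)
    (z2 : tX B₁ A₂ (n-1)) (z3 : tX A₁ B₂ (n-1)) (z4 : tX B₁ B₂ (n-2)) :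
    sftD f₁ f₂ n ((z1, (z2, z3), z4) : sftX A₁ B₁ A₂ B₂ n) =
      (tD A₁ A₂ n z1,
       (tc B₁ A₂ (show n = n + 1 - 1 by omega) (tM f₁.f (fun _ => LinearMap.id) n z1) -
          tc B₁ A₂ (show n - 1 + 1 = n + 1 - 1 by omega) (tD B₁ A₂ (n-1) z2),
        tc A₁ B₂ (show n = n + 1 - 1 by omega) (tM (fun _ => LinearMap.id) f₂.f n z1) -
          tc A₁ B₂ (show n - 1 + 1 = n + 1 - 1 by omega) (tD A₁ B₂ (n-1) z3)),
       -(tc B₁ B₂ (show n - 1 = n + 1 - 2 by omega)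
            (tM (fun _ => LinearMap.id) f₂.f (n-1) z2)) +
         tc B₁ B₂ (show n - 1 = n + 1 - 2 by omega) (tM f₁.f (fun _ => LinearMap.id) (n-1) z3) +
         tc B₁ B₂ (show n - 2 + 1 = n + 1 - 2 by omega) (tD B₁ B₂ (n-2) z4)) := rfl

lemma beta2_comm (f₁ : Hom A₁ B₁) (f₂ : Hom A₂ B₂) (n : ℤ) (z : sftX A₁ B₁ A₂ B₂ n) :
    beta2 (n + 1) (sftD f₁ f₂ n z) = sftD f₂ f₁ n (beta2 n z) := by
  obtain ⟨z1, ⟨z2, z3⟩, z4⟩ := z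
  rw [sftD_apply, beta2_apply, beta2_apply, sftD_apply]
  refine Prod.ext ?_ (Prod.ext (Prod.ext ?_ ?_) ?_) <;>
    simp only [map_sub, map_add, map_neg, tc_braid, braid_tM, braid_tD] <;> abel

lemma beta2_beta2 (n : ℤ) (z : sftX A₁ B₁ A₂ B₂ n) :
    beta2 n (beta2 n z) = z := by
  obtain ⟨z1, ⟨z2, z3⟩, z4⟩ := z
  rw [beta2_apply, beta2_apply, braid_braid, braid_braid, braid_braid, map_neg,
    braid_braid, neg_neg]

lemma square (f₁ : Hom A₁ B₁) (f₂ : Hom A₂ B₂) (n : ℤ) (z : tX (smp f₁) (smp f₂) n) :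
    beta2 n (rho f₁ f₂ n z) = rho f₂ f₁ n (braid (smp f₁) (smp f₂) n z) := by
  have key : (beta2 n).comp (rho f₁ f₂ n) =
      (rho f₂ f₁ n).comp (braid (smp f₁) (smp f₂) n) := by
    apply tX_ext
    intro p x y
    have e3 : ((p - 1) * (n - p)).negOnePow = (p * (n - p) + (n - p)).negOnePow := by
      apply sign_congr
      rw [show (p - 1) * (n - p) - (p * (n - p) + (n - p)) = 2 * (-(n - p)) by ring]
      omega
    have e4 : (p - 1 + (p - 1) * (n - p - 1) + 1).negOnePow
        = (p * (n - p) + (n - p - 1)).negOnePow := by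
      apply sign_congr
      rw [show p - 1 + (p - 1) * (n - p - 1) + 1 - (p * (n - p) + (n - p - 1)) =
        2 * (p - n + 1) by ring]
      omega
    rw [LinearMap.comp_apply, LinearMap.comp_apply, rho_lof, beta2_apply,
      braid_lof,
      map_zsmul (rho f₂ f₁ n) _ _, rho_lof, smp_cE f₁ _ (show p - 1 = n - (n - p) - 1 by omega)]
    rw [map_zsmul, map_zsmul, braid_iot A₁ A₂ n rfl (show p = n - (n - p) by omega),
      braid_iot A₁ B₂ (n-1) _ (show p = n - 1 - (n - p - 1) by omega),
      braid_iot B₁ A₂ (n-1) _ (show p - 1 = n - 1 - (n - p) by omega),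
      braid_iot B₁ B₂ (n-2) _ (show p - 1 = n - 2 - (n - p - 1) by omega)]
    rw [Prod.smul_mk, Prod.smul_mk, Prod.smul_mk]
    refine Prod.ext ?_ (Prod.ext (Prod.ext ?_ ?_) ?_) <;> dsimp only
    · rw [iot_cE_right A₂ A₁ n _ _ (show p = n - (n - p) by omega)]
    · rw [iot_cE_right B₂ A₁ (n-1) _ _ (show p = n - 1 - (n - p - 1) by omega)]
      simp only [smul_smul, zsign_mul]
      rw [show p + p * (n - p - 1) = p * (n - p) by ring]
    · rw [iot_cE_right A₂ B₁ (n-1) _ _ (show p - 1 = n - 1 - (n - p) by omega)]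
      simp only [smul_smul, zsign_mul]
      rw [congrArg Units.val e3]
    · rw [iot_cE_right B₂ B₁ (n-2) _ _ (show p - 1 = n - 2 - (n - p - 1) by omega)]
      simp only [smul_smul, zsign_mul, ← neg_smul, zsign_neg]
      rw [congrArg Units.val e4]
  exact LinearMap.congr_fun key z

end Helpers
open Helpers in
/-- **Statement 15.**  For morphisms of complexes `f₁ : A₁ → B₁`, `f₂ : A₂ → B₂`, let
`α₁ : s(f₁)⊗s(f₂) → s(f₁⊗f₂)` and `β₁ : s(f₂)⊗s(f₁) → s(f₂⊗f₁)` be the canonical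
isomorphisms, `α₂` the Koszul braiding `s(f₁)⊗s(f₂) → s(f₂)⊗s(f₁)` and
`β₂ : s(f₁⊗f₂) → s(f₂⊗f₁)` the signed swap described in the statement.  Then `β₂` is a
well-defined isomorphism of complexes, and `β₂ ∘ α₁ = β₁ ∘ α₂`. -/
theorem statement15 (f₁ : Hom A₁ B₁) (f₂ : Hom A₂ B₂)
    (hA₁ : ∀ n x, A₁.d (n + 1) (A₁.d n x) = 0) (hB₁ : ∀ n x, B₁.d (n + 1) (B₁.d n x) = 0)
    (hA₂ : ∀ n x, A₂.d (n + 1) (A₂.d n x) = 0) (hB₂ : ∀ n x, B₂.d (n + 1) (B₂.d n x) = 0) :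
    -- `α₂` is the Koszul braiding: on homogeneous tensors `x ⊗ y ↦ (-1)^{pq} y ⊗ x`
    (∀ (n p : ℤ) (x : (smp f₁).X p) (y : (smp f₂).X (n - p)),
      braid (smp f₁) (smp f₂) n
          (DirectSum.lof R ℤ (fun q => (smp f₁).X q ⊗[R] (smp f₂).X (n - q)) p
            (x ⊗ₜ[R] y)) =
        ((p * (n - p)).negOnePow : ℤ) •
          DirectSum.lof R ℤ (fun q => (smp f₂).X q ⊗[R] (smp f₁).X (n - q)) (n - p)
            (y ⊗ₜ[R] (smp f₁).cE (show p = n - (n - p) by omega) x)) ∧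
    -- `β₂` is given on homogeneous tensors by the asserted signed swaps:
    -- on the `A₁⊗A₂` part, `a₁ ⊗ a₂ ↦ (-1)^{nm} a₂ ⊗ a₁`,
    (∀ (n p : ℤ) (x : A₁.X p) (y : A₂.X (n - p)),
      beta2 n ((DirectSum.lof R ℤ (fun q => A₁.X q ⊗[R] A₂.X (n - q)) p (x ⊗ₜ[R] y),
          ((0, 0), 0)) : sftX A₁ B₁ A₂ B₂ n) =
        (((p * (n - p)).negOnePow : ℤ) •
            DirectSum.lof R ℤ (fun q => A₂.X q ⊗[R] A₁.X (n - q)) (n - p)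
              (y ⊗ₜ[R] A₁.cE (show p = n - (n - p) by omega) x),
          ((0, 0), 0))) ∧
    -- on the `B₁⊗A₂` part, `b₁ ⊗ a₂ ↦ (-1)^{(n-1)m} a₂ ⊗ b₁`,
    (∀ (n p : ℤ) (x : B₁.X p) (y : A₂.X (n - 1 - p)),
      beta2 n ((0, ((DirectSum.lof R ℤ (fun q => B₁.X q ⊗[R] A₂.X (n - 1 - q)) p
            (x ⊗ₜ[R] y), 0), 0)) : sftX A₁ B₁ A₂ B₂ n) =
        (0, ((0, ((p * (n - 1 - p)).negOnePow : ℤ) •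
            DirectSum.lof R ℤ (fun q => A₂.X q ⊗[R] B₁.X (n - 1 - q)) (n - 1 - p)
              (y ⊗ₜ[R] B₁.cE (show p = n - 1 - (n - 1 - p) by omega) x)), 0))) ∧
    -- on the `A₁⊗B₂` part, `a₁ ⊗ b₂ ↦ (-1)^{n(m-1)} b₂ ⊗ a₁`,
    (∀ (n p : ℤ) (x : A₁.X p) (y : B₂.X (n - 1 - p)),
      beta2 n ((0, ((0, DirectSum.lof R ℤ (fun q => A₁.X q ⊗[R] B₂.X (n - 1 - q)) p
            (x ⊗ₜ[R] y)), 0)) : sftX A₁ B₁ A₂ B₂ n) =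
        (0, ((((p * (n - 1 - p)).negOnePow : ℤ) •
            DirectSum.lof R ℤ (fun q => B₂.X q ⊗[R] A₁.X (n - 1 - q)) (n - 1 - p)
              (y ⊗ₜ[R] A₁.cE (show p = n - 1 - (n - 1 - p) by omega) x), 0), 0))) ∧
    -- and on the `B₁⊗B₂` part, `b₁ ⊗ b₂ ↦ (-1)^{nm-n-m} b₂ ⊗ b₁`,
    (∀ (n p : ℤ) (x : B₁.X p) (y : B₂.X (n - 2 - p)),
      beta2 n ((0, ((0, 0), DirectSum.lof R ℤ (fun q => B₁.X q ⊗[R] B₂.X (n - 2 - q)) p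
            (x ⊗ₜ[R] y))) : sftX A₁ B₁ A₂ B₂ n) =
        (0, ((0, 0), -(((p * (n - 2 - p)).negOnePow : ℤ) •
            DirectSum.lof R ℤ (fun q => B₂.X q ⊗[R] B₁.X (n - 2 - q)) (n - 2 - p)
              (y ⊗ₜ[R] B₁.cE (show p = n - 2 - (n - 2 - p) by omega) x))))) ∧
    -- `β₂` is a morphism of complexes ...
    (∀ (n : ℤ) (z : sftX A₁ B₁ A₂ B₂ n),
      beta2 (n + 1) (sftD f₁ f₂ n z) = sftD f₂ f₁ n (beta2 n z)) ∧
    -- ... and an isomorphism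
    (∀ n : ℤ, Function.Bijective (beta2 (A₁ := A₁) (B₁ := B₁) (A₂ := A₂) (B₂ := B₂) n)) ∧
    -- the square commutes: `β₂ ∘ α₁ = β₁ ∘ α₂`
    (∀ (n : ℤ) (z : tX (smp f₁) (smp f₂) n),
      beta2 n (rho f₁ f₂ n z) = rho f₂ f₁ n (braid (smp f₁) (smp f₂) n z)) := by
  refine ⟨braid_lof (smp f₁) (smp f₂), fun n p x y => ?_, fun n p x y => ?_,
    fun n p x y => ?_, fun n p x y => ?_, beta2_comm f₁ f₂, fun n => ?_, square f₁ f₂⟩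
  · rw [beta2_apply, braid_lof, map_zero, map_zero, map_zero, neg_zero]
  · rw [beta2_apply, braid_lof, map_zero, map_zero, map_zero, neg_zero]
  · rw [beta2_apply, braid_lof, map_zero, map_zero, map_zero, neg_zero]
  · rw [beta2_apply, braid_lof, map_zero, map_zero, map_zero]
  · exact Function.bijective_iff_has_inverse.mpr
      ⟨beta2 n, fun z => beta2_beta2 n z, fun z => beta2_beta2 n z⟩

end Statement15

end
end
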